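/- arXiv:0804.3511 — 2 statements merged into one kernel-verified Lean document; each statement's English description precedes it below -/
import Mathlib

section
/- Let 0 < α < 1 < n and k_{1,α}(x) = γ_n(α)^{−1}(|x|^{α−n} − |x−e₁|^{α−n}). Then k_{1,α} is integrable on ℝⁿ and ∫_{ℝⁿ} k_{1,α}(y) dy = 0. -/
/-!
Near its two singularities `k₁` is dominated by `|x|^{α-n}` or `|x-e₁|^{α-n}`, both locally
integrable since `α > 0`. At infinity the mean value theorem gives `|k₁(x)| ≲ |x|^{α-n-1}`,
integrable since `α < 1`. The integral vanishes because `k₁(e₁ - x) = -k₁(x)` and Lebesgue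
measure is invariant under `x ↦ e₁ - x`; note that the two terms of `k₁` are not separately
integrable, so the integral cannot be split.
-/

open MeasureTheory Filter Asymptotics Module

noncomputable section

/-- The normalizing constant `γ_n(α)` of the Riesz potential. -/
def rieszGamma (n : ℕ) (α : ℝ) : ℝ :=
  2 ^ α * Real.pi ^ ((n : ℝ) / 2) * Real.Gamma (α / 2) / Real.Gamma (((n : ℝ) - α) / 2)

/-- The first standard basis vector `e₁` of `ℝⁿ`. -/
def e1 (n : ℕ) [NeZero n] : EuclideanSpace ℝ (Fin n) := EuclideanSpace.single 0 1

/-- First-order non-centered difference of the Riesz kernel. -/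
def k1 (n : ℕ) [NeZero n] (α : ℝ) (x : EuclideanSpace ℝ (Fin n)) : ℝ :=
  (rieszGamma n α)⁻¹ * (‖x‖ ^ (α - n) - ‖x - e1 n‖ ^ (α - n))

lemma Real.abs_rpow_sub_rpow_le_of_neg {p m a b : ℝ} (hp : p < 0) (hm : 0 < m)
    (ha : m ≤ a) (hb : m ≤ b) :
    |a ^ p - b ^ p| ≤ -p * m ^ (p - 1) * |a - b| := by
  have hderiv : ∀ t ∈ Set.Ici m, HasDerivWithinAt (· ^ p) (p * t ^ (p - 1)) (Set.Ici m) t :=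
    fun t ht ↦ (Real.hasDerivAt_rpow_const (Or.inl (hm.trans_le ht).ne')).hasDerivWithinAt
  have hbound : ∀ t ∈ Set.Ici m, ‖p * t ^ (p - 1)‖ ≤ -p * m ^ (p - 1) := by
    intro t ht
    have ht0 : 0 < t := hm.trans_le ht
    rw [norm_mul, Real.norm_of_nonpos hp.le, Real.norm_of_nonneg (Real.rpow_nonneg ht0.le _)]
    exact mul_le_mul_of_nonneg_left (Real.rpow_le_rpow_of_nonpos hm ht (by linarith)) (by linarith)
  simpa [Real.norm_eq_abs] using
    (convex_Ici m).norm_image_sub_le_of_norm_hasDerivWithin_le hderiv hbound hb ha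

lemma abs_norm_rpow_sub_norm_sub_rpow_le {E : Type*} [SeminormedAddCommGroup E] {p : ℝ}
    (hp : p < 0) {v x : E}
    (hx : 2 * ‖v‖ + 1 ≤ ‖x‖) :
    |‖x‖ ^ p - ‖x - v‖ ^ p| ≤ -p * 2 ^ (1 - p) * ‖v‖ * (1 + ‖x‖) ^ (p - 1) := by
  set m := (1 + ‖x‖) / 2 with hm_def
  have hm : 0 < m := by positivity
  have hmx : m ≤ ‖x‖ := by linarith [norm_nonneg v]
  have hmxv : m ≤ ‖x - v‖ := by linarith [norm_sub_norm_le x v, norm_nonneg v]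
  have hdiff : |‖x‖ - ‖x - v‖| ≤ ‖v‖ := by
    simpa using abs_norm_sub_norm_le x (x - v)
  have hpow : m ^ (p - 1) = 2 ^ (1 - p) * (1 + ‖x‖) ^ (p - 1) := by
    rw [Real.div_rpow (by positivity) zero_le_two, div_eq_mul_inv, ← Real.rpow_neg zero_le_two,
      neg_sub, mul_comm]
  calc |‖x‖ ^ p - ‖x - v‖ ^ p| ≤ -p * m ^ (p - 1) * |‖x‖ - ‖x - v‖| :=
        Real.abs_rpow_sub_rpow_le_of_neg hp hm hmx hmxv
    _ ≤ -p * m ^ (p - 1) * ‖v‖ :=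
        mul_le_mul_of_nonneg_left hdiff (mul_nonneg (neg_nonneg.2 hp.le) (by positivity))
    _ = -p * 2 ^ (1 - p) * ‖v‖ * (1 + ‖x‖) ^ (p - 1) := by rw [hpow]; ring

section

variable {E : Type*} [NormedAddCommGroup E] [NormedSpace ℝ E] [FiniteDimensional ℝ E]
  [MeasurableSpace E] [BorelSpace E] (μ : Measure E) [μ.IsAddHaarMeasure]

lemma locallyIntegrable_norm_sub_rpow [Nontrivial E] {p : ℝ} (hp : -(finrank ℝ E : ℝ) < p)
    (v : E) : LocallyIntegrable (fun x ↦ ‖x - v‖ ^ p) μ := by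
  have h0 : LocallyIntegrable (fun x : E ↦ ‖x‖ ^ p) μ := by
    refine locallyIntegrable_of_norm_le_rpow finrank_pos (α := -p) (C := 1) (by linarith)
      (ae_of_all _ fun x ↦ ?_)
      (by fun_prop : Measurable fun x : E ↦ ‖x‖ ^ p).aestronglyMeasurable
    rw [neg_neg, one_mul, Real.norm_of_nonneg (Real.rpow_nonneg (norm_nonneg x) p)]
  rw [← map_sub_right_eq_self μ v] at h0
  exact (locallyIntegrable_map_homeomorph (Homeomorph.subRight v)).1 h0

theorem integrable_norm_rpow_sub_norm_sub_rpow [Nontrivial E] {p : ℝ}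
    (hp_lo : -(finrank ℝ E : ℝ) < p) (hp_hi : p < 1 - finrank ℝ E) (v : E) :
    Integrable (fun x ↦ ‖x‖ ^ p - ‖x - v‖ ^ p) μ := by
  have hp : p < 0 := by
    have : (1 : ℝ) ≤ finrank ℝ E := by exact_mod_cast finrank_pos (R := ℝ) (M := E)
    linarith
  have hloc : LocallyIntegrable (fun x ↦ ‖x‖ ^ p - ‖x - v‖ ^ p) μ := by
    have h := (locallyIntegrable_norm_sub_rpow μ hp_lo 0).sub
      (locallyIntegrable_norm_sub_rpow μ hp_lo v)
    simp only [sub_zero] at h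
    exact h
  have hfar : ∀ᶠ x in cocompact E, 2 * ‖v‖ + 1 ≤ ‖x‖ :=
    tendsto_norm_cocompact_atTop.eventually_ge_atTop _
  refine hloc.integrable_of_isBigO_cocompact
    (IsBigO.of_bound (-p * 2 ^ (1 - p) * ‖v‖) (hfar.mono fun x hx ↦ ?_))
    ((integrable_one_add_norm (r := 1 - p) (by linarith)).integrableAtFilter _)
  rw [Real.norm_eq_abs, neg_sub, Real.norm_of_nonneg (by positivity)]
  exact abs_norm_rpow_sub_norm_sub_rpow_le hp hx

end

theorem integral_eq_zero_of_comp_sub_left_eq_neg {G F : Type*} [MeasurableSpace G] [AddGroup G]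
    [MeasurableAdd G] [MeasurableNeg G] [NormedAddCommGroup F] [NormedSpace ℝ F]
    (μ : Measure G) [μ.IsNegInvariant] [μ.IsAddLeftInvariant] {f : G → F} (v : G)
    (hf : ∀ x, f (v - x) = -f x) : ∫ x, f x ∂μ = 0 := by
  have := IsAddTorsionFree.of_isTorsionFree ℝ F
  have h := integral_sub_left_eq_self f μ v
  simp_rw [hf, integral_neg] at h
  exact neg_eq_self.1 h

theorem stmt6_general (n : ℕ) [NeZero n] (α : ℝ) (hα0 : 0 < α) (hα1 : α < 1) :
    Integrable (k1 n α) ∧ ∫ y, k1 n α y = 0 := by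
  have hdim : finrank ℝ (EuclideanSpace ℝ (Fin n)) = n := finrank_euclideanSpace_fin
  have hdiff : Integrable fun x : EuclideanSpace ℝ (Fin n) ↦
      ‖x‖ ^ (α - n) - ‖x - e1 n‖ ^ (α - n) :=
    integrable_norm_rpow_sub_norm_sub_rpow volume (by rw [hdim]; linarith)
      (by rw [hdim]; linarith) (e1 n)
  refine ⟨hdiff.const_mul _, integral_eq_zero_of_comp_sub_left_eq_neg volume (e1 n) fun y ↦ ?_⟩
  rw [k1, k1, norm_sub_rev, sub_sub_cancel_left, norm_neg]
  ring

theorem stmt6 (n : ℕ) [NeZero n] (hn : 1 < n) (α : ℝ) (hα0 : 0 < α) (hα1 : α < 1) :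
    Integrable (k1 n α) ∧ ∫ y, k1 n α y = 0 :=
  stmt6_general n α hα0 hα1

end
end

section
/- Let 0 < α < 1 < n and define K_{1,α}(x) = d_{n,1}(α)^{−1} |x|^{−n} ∫_{|y|<|x|} k_{1,α}(y) dy, where k_{1,α}(y) = γ_n(α)^{−1}(|y|^{α−n} − |y−e₁|^{α−n}). Then there is a constant C > 0 such that |K_{1,α}(x)| ≤ C|x|^{α−n} for all 0 < |x| ≤ 1. -/
open MeasureTheory Metric Set

noncomputable section

/-! The kernel difference is dominated by `|γ⁻¹| (‖y‖^(α-n) + ‖y - e₁‖^(α-n))`. As `‖·‖^(α-n)`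
is radially decreasing, its integral over a ball of radius `r` is largest when the ball is centred
at `0` (bathtub principle: moving mass from outside `B(0, r)` to inside only increases the
integral), so the translated term is bounded by the centred one. In polar coordinates
`∫_{‖y‖<r} ‖y‖^(α-n) dy = (n/α) |B₁| r^α`, and the factor `‖x‖^(-n)` at `r = ‖x‖` turns this
into `C ‖x‖^(α-n)`. -/

theorem Real.pow_sub_one_mul_rpow {t : ℝ} (ht : 0 < t) {d : ℕ} (hd : 1 ≤ d) (s : ℝ) :
    t ^ (d - 1) * t ^ s = t ^ ((d : ℝ) - 1 + s) := by
  rw [Real.rpow_add ht, ← Real.rpow_natCast, Nat.cast_sub hd, Nat.cast_one]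

section Bathtub
variable {X : Type*} [MeasurableSpace X] {μ : Measure X}

theorem setLIntegral_le_setLIntegral_of_measure_le {f : X → ENNReal} {A B : Set X} {c : ENNReal}
    (hA : MeasurableSet A) (hB : MeasurableSet B) (hμ : μ A ≤ μ B) (hB_fin : μ B ≠ ⊤)
    (hout : ∀ᵐ x ∂μ.restrict (A \ B), f x ≤ c) (hin : ∀ᵐ x ∂μ.restrict (B \ A), c ≤ f x) :
    ∫⁻ x in A, f x ∂μ ≤ ∫⁻ x in B, f x ∂μ := by
  have hsdiff : μ (A \ B) ≤ μ (B \ A) := by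
    have hfin : μ (A ∩ B) ≠ ⊤ := measure_ne_top_of_subset inter_subset_right hB_fin
    rwa [← ENNReal.add_le_add_iff_left hfin, measure_inter_add_sdiff _ hB, inter_comm,
      measure_inter_add_sdiff _ hA]
  calc ∫⁻ x in A, f x ∂μ = ∫⁻ x in A ∩ B, f x ∂μ + ∫⁻ x in A \ B, f x ∂μ :=
        (lintegral_inter_add_sdiff f A hB).symm
    _ ≤ ∫⁻ x in A ∩ B, f x ∂μ + c * μ (A \ B) := by
        grw [lintegral_mono_ae hout, setLIntegral_const]
    _ ≤ ∫⁻ x in B ∩ A, f x ∂μ + ∫⁻ x in B \ A, f x ∂μ := by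
        grw [inter_comm, hsdiff, ← setLIntegral_const, lintegral_mono_ae hin]
    _ = ∫⁻ x in B, f x ∂μ := lintegral_inter_add_sdiff f B hA
end Bathtub

section Radial
variable {E : Type*} [NormedAddCommGroup E] [NormedSpace ℝ E] [FiniteDimensional ℝ E]
  [MeasurableSpace E] [BorelSpace E] [Nontrivial E] (μ : Measure E) [μ.IsAddHaarMeasure]

local notation "dim" => Module.finrank ℝ E

theorem integrableOn_norm_rpow_ball {s : ℝ} (hs : -(dim : ℝ) < s) (r : ℝ) :
    IntegrableOn (fun x : E ↦ ‖x‖ ^ s) (ball 0 r) μ := by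
  rw [integrableOn_fun_norm_addHaar μ (f := fun t ↦ t ^ s)]
  rcases le_or_gt r 0 with hr | hr
  · simp [Ioo_eq_empty_of_le hr]
  refine ((intervalIntegral.integrableOn_Ioo_rpow_iff (s := (dim : ℝ) - 1 + s) hr).2
    (by linarith)).congr_fun (fun t ht ↦ ?_) measurableSet_Ioo
  exact (Real.pow_sub_one_mul_rpow ht.1 (Module.finrank_pos (R := ℝ) (M := E)) s).symm

theorem integral_norm_rpow_ball {s : ℝ} (hs : -(dim : ℝ) < s) {r : ℝ} (hr : 0 ≤ r) :
    ∫ x in ball 0 r, ‖x‖ ^ s ∂μ = dim * μ.real (ball 0 1) * (r ^ (dim + s) / (dim + s)) := by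
  have hradial : ∫ t in Ioi (0 : ℝ), t ^ (dim - 1) • (Iio r).indicator (· ^ s) t =
      r ^ (dim + s) / (dim + s) := by
    calc ∫ t in Ioi (0 : ℝ), t ^ (dim - 1) • (Iio r).indicator (· ^ s) t
        = ∫ t in Ioo 0 r, t ^ ((dim : ℝ) - 1 + s) := by
          rw [funext fun t ↦ (indicator_smul_apply (Iio r) (· ^ (dim - 1)) (· ^ s) t).symm,
            setIntegral_indicator measurableSet_Iio, Ioi_inter_Iio]
          refine setIntegral_congr_fun measurableSet_Ioo (fun t ht ↦ ?_)
          exact Real.pow_sub_one_mul_rpow ht.1 (Module.finrank_pos (R := ℝ) (M := E)) s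
      _ = ∫ t in (0)..r, t ^ ((dim : ℝ) - 1 + s) := by
          rw [intervalIntegral.integral_of_le hr, integral_Ioc_eq_integral_Ioo]
      _ = r ^ (dim + s) / (dim + s) := by
          rw [integral_rpow (Or.inl (by linarith)), show (dim : ℝ) - 1 + s + 1 = dim + s by ring,
            Real.zero_rpow (by linarith), sub_zero]
  calc ∫ x in ball 0 r, ‖x‖ ^ s ∂μ = ∫ x, (Iio r).indicator (· ^ s) ‖x‖ ∂μ := by
        rw [← integral_indicator measurableSet_ball]
        congr 1 with x
        simp [indicator]
    _ = dim * μ.real (ball 0 1) * (r ^ (dim + s) / (dim + s)) := by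
        rw [integral_fun_norm_addHaar, hradial, nsmul_eq_mul, smul_eq_mul, mul_assoc]

theorem lintegral_norm_rpow_ball {s : ℝ} (hs : -(dim : ℝ) < s) {r : ℝ} (hr : 0 ≤ r) :
    ∫⁻ x in ball 0 r, ENNReal.ofReal (‖x‖ ^ s) ∂μ =
      ENNReal.ofReal (dim * μ.real (ball 0 1) * (r ^ (dim + s) / (dim + s))) := by
  rw [← integral_norm_rpow_ball μ hs hr, ofReal_integral_eq_lintegral_ofReal
    (integrableOn_norm_rpow_ball μ hs r) (ae_of_all _ fun x ↦ by positivity)]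

theorem setLIntegral_ball_norm_rpow_le_ball_zero {s : ℝ} (hs : s ≤ 0) (c : E) (r : ℝ) :
    ∫⁻ x in ball c r, ENNReal.ofReal (‖x‖ ^ s) ∂μ ≤
      ∫⁻ x in ball 0 r, ENNReal.ofReal (‖x‖ ^ s) ∂μ := by
  have mem_sdiff_ae {A B : Set E} (hA : MeasurableSet A) (hB : MeasurableSet B) :
      ∀ᵐ x ∂μ.restrict (A \ B), x ∈ A \ B := ae_restrict_mem (hA.diff hB)
  refine setLIntegral_le_setLIntegral_of_measure_le (c := ENNReal.ofReal (r ^ s))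
    measurableSet_ball measurableSet_ball (Measure.addHaar_ball_center μ c r).le
    measure_ball_lt_top.ne
    ((mem_sdiff_ae measurableSet_ball measurableSet_ball).mono fun x hx ↦ ?_) ?_
  · have hr : 0 < r := dist_nonneg.trans_lt hx.1
    have hxr : r ≤ ‖x‖ := by simpa using hx.2
    exact ENNReal.ofReal_le_ofReal (Real.rpow_le_rpow_of_nonpos hr hxr hs)
  · have hne : ∀ᵐ x ∂μ, x ≠ 0 := compl_mem_ae_iff.2 (measure_singleton 0)
    filter_upwards [ae_restrict_of_ae hne, mem_sdiff_ae measurableSet_ball measurableSet_ball]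
      with x hx0 hx
    have hxr : ‖x‖ ≤ r := by simpa using (mem_ball_zero_iff.1 hx.1).le
    exact ENNReal.ofReal_le_ofReal (Real.rpow_le_rpow_of_nonpos (norm_pos_iff.2 hx0) hxr hs)

end Radial

theorem setLIntegral_ball_comp_sub {G : Type*} [SeminormedAddCommGroup G] [MeasurableSpace G]
    [MeasurableAdd G] (μ : Measure G) [μ.IsAddRightInvariant] (g : G → ENNReal) (c : G) (r : ℝ) :
    ∫⁻ y in ball 0 r, g (y - c) ∂μ = ∫⁻ z in ball (-c) r, g z ∂μ := by
  simp_rw [sub_eq_add_neg]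
  rw [← (measurePreserving_add_right μ (-c)).setLIntegral_comp_preimage_emb
    (measurableEmbedding_addRight (-c)) g (ball (-c) r), preimage_add_right_ball, sub_self]

theorem abs_integral_ball_k1_le (n : ℕ) [NeZero n] {α : ℝ} (hα0 : 0 < α) (hαn : α ≤ n) {r : ℝ}
    (hr : 0 ≤ r) :
    |∫ y in ball 0 r, k1 n α y| ≤
      2 * |(rieszGamma n α)⁻¹| * (n * volume.real (ball (0 : EuclideanSpace ℝ (Fin n)) 1) *
        (r ^ α / α)) := by
  set J := n * volume.real (ball (0 : EuclideanSpace ℝ (Fin n)) 1) * (r ^ α / α)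
  have hs : α - n ≤ 0 := sub_nonpos.2 hαn
  have hs_dim : -(Module.finrank ℝ (EuclideanSpace ℝ (Fin n)) : ℝ) < α - n := by
    rw [finrank_euclideanSpace_fin]; linarith
  have hJ : ∫⁻ y in ball (0 : EuclideanSpace ℝ (Fin n)) r, ENNReal.ofReal (‖y‖ ^ (α - n)) =
      ENNReal.ofReal J := by
    have := lintegral_norm_rpow_ball volume hs_dim hr
    rwa [finrank_euclideanSpace_fin, add_sub_cancel] at this
  have hshift : ∫⁻ y in ball (0 : EuclideanSpace ℝ (Fin n)) r,
      ENNReal.ofReal (‖y - e1 n‖ ^ (α - n)) ≤ ENNReal.ofReal J := by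
    rw [setLIntegral_ball_comp_sub volume (fun z ↦ ENNReal.ofReal (‖z‖ ^ (α - n))), ← hJ]
    exact setLIntegral_ball_norm_rpow_le_ball_zero volume hs _ r
  have hpointwise (y : EuclideanSpace ℝ (Fin n)) : ENNReal.ofReal ‖k1 n α y‖ ≤
      ENNReal.ofReal |(rieszGamma n α)⁻¹| *
        (ENNReal.ofReal (‖y‖ ^ (α - n)) + ENNReal.ofReal (‖y - e1 n‖ ^ (α - n))) := by
    have ha : 0 ≤ ‖y‖ ^ (α - n) := by positivity
    have hb : 0 ≤ ‖y - e1 n‖ ^ (α - n) := by positivity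
    rw [← ENNReal.ofReal_add ha hb, ← ENNReal.ofReal_mul (abs_nonneg _), k1, Real.norm_eq_abs,
      abs_mul]
    gcongr
    exact abs_sub_le_of_nonneg_of_le ha (le_add_of_nonneg_right hb) hb (le_add_of_nonneg_left ha)
  have hlintegral : ∫⁻ y in ball (0 : EuclideanSpace ℝ (Fin n)) r, ENNReal.ofReal ‖k1 n α y‖ ≤
      ENNReal.ofReal (2 * |(rieszGamma n α)⁻¹| * J) := calc
    _ ≤ ∫⁻ y in ball (0 : EuclideanSpace ℝ (Fin n)) r, ENNReal.ofReal |(rieszGamma n α)⁻¹| *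
          (ENNReal.ofReal (‖y‖ ^ (α - n)) + ENNReal.ofReal (‖y - e1 n‖ ^ (α - n))) :=
        lintegral_mono hpointwise
    _ = ENNReal.ofReal |(rieszGamma n α)⁻¹| *
          ((∫⁻ y in ball (0 : EuclideanSpace ℝ (Fin n)) r, ENNReal.ofReal (‖y‖ ^ (α - n))) +
            ∫⁻ y in ball (0 : EuclideanSpace ℝ (Fin n)) r,
              ENNReal.ofReal (‖y - e1 n‖ ^ (α - n))) := by
        rw [lintegral_const_mul' _ _ ENNReal.ofReal_ne_top, lintegral_add_left (by fun_prop)]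
    _ ≤ ENNReal.ofReal |(rieszGamma n α)⁻¹| * (ENNReal.ofReal J + ENNReal.ofReal J) := by
        grw [hJ, hshift]
    _ = ENNReal.ofReal (2 * |(rieszGamma n α)⁻¹| * J) := by
        rw [← ENNReal.ofReal_add (by positivity) (by positivity),
          ← ENNReal.ofReal_mul (abs_nonneg _)]
        ring_nf
  rw [← Real.norm_eq_abs]
  exact (norm_integral_le_lintegral_norm _).trans
    (ENNReal.toReal_le_of_le_ofReal (by positivity) hlintegral)

theorem stmt7_general (n : ℕ) [NeZero n] (α : ℝ) (hα0 : 0 < α) (hα1 : α < 1) (d : ℝ) :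
    ∃ C > (0 : ℝ), ∀ x : EuclideanSpace ℝ (Fin n), 0 < ‖x‖ → ‖x‖ ≤ 1 →
      |d⁻¹ * ‖x‖ ^ (-(n : ℝ)) * ∫ y in ball (0 : EuclideanSpace ℝ (Fin n)) ‖x‖, k1 n α y| ≤
        C * ‖x‖ ^ (α - n) := by
  have hαn : α ≤ n := hα1.le.trans (by exact_mod_cast NeZero.one_le)
  set K := 2 * |(rieszGamma n α)⁻¹| *
    (n * volume.real (ball (0 : EuclideanSpace ℝ (Fin n)) 1) / α)
  refine ⟨|d⁻¹| * K + 1, by positivity, fun x hx _ ↦ ?_⟩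
  calc |d⁻¹ * ‖x‖ ^ (-(n : ℝ)) * ∫ y in ball 0 ‖x‖, k1 n α y|
      = |d⁻¹| * ‖x‖ ^ (-(n : ℝ)) * |∫ y in ball 0 ‖x‖, k1 n α y| := by
        rw [abs_mul, abs_mul, abs_of_nonneg (by positivity : 0 ≤ ‖x‖ ^ (-(n : ℝ)))]
    _ ≤ |d⁻¹| * ‖x‖ ^ (-(n : ℝ)) * (K * ‖x‖ ^ α) := by
        gcongr
        exact (abs_integral_ball_k1_le n hα0 hαn hx.le).trans_eq (by ring)
    _ = |d⁻¹| * K * ‖x‖ ^ (α - n) := by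
        rw [sub_eq_neg_add, Real.rpow_add hx]
        ring
    _ ≤ (|d⁻¹| * K + 1) * ‖x‖ ^ (α - n) := by gcongr; linarith

theorem stmt7 (n : ℕ) [NeZero n] (hn : 1 < n) (α : ℝ) (hα0 : 0 < α) (hα1 : α < 1)
    (d : ℝ) (hd : d ≠ 0) :
    ∃ C > (0 : ℝ), ∀ x : EuclideanSpace ℝ (Fin n), 0 < ‖x‖ → ‖x‖ ≤ 1 →
      |d⁻¹ * ‖x‖ ^ (-(n : ℝ)) * ∫ y in ball (0 : EuclideanSpace ℝ (Fin n)) ‖x‖, k1 n α y| ≤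
        C * ‖x‖ ^ (α - n) :=
  stmt7_general n α hα0 hα1 d
end
end
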